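/- arXiv:math/0412254 — 2 statements merged into one kernel-verified Lean document; each statement's English description precedes it below -/
import Mathlib

section
/- Let (X, μ) be a standard Borel space with an atomless Borel probability measure μ, and let Φ be a finite family of partial isomorphisms of (X, μ) whose induced extended metric d_Φ is ergodic. Then the metric-measure space (X, d_Φ, μ) is concentrated if and only if there is no nontrivial asymptotically invariant sequence of Borel subsets of X for Φ. -/
/-!
If `(X, d_Φ, μ)` is concentrated, there is an `r` such that the `r`-thickening of any set of
measure `≥ δ` misses less than `δ / 2` of `X`. For an asymptotically invariant sequence `A_n`
the thickening exceeds `A_n` by a vanishing amount, because only finitely many words have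
length `≤ r`; hence `μ(A_n) > 1 - δ` eventually.

Conversely, if concentration fails, there are sets `A_r`, `B_r` of measure `≥ δ` at distance
`> r`. Cutting the `s²`-thickening of `A_{s²}` into `s` shells of width `s`, one shell has
measure `≤ 1 / s`; the thickening enclosed by it is moved by words of length `≤ s` only into
that shell, contains `A_{s²}` and misses `B_{s²}`. These thickenings form a nontrivial
asymptotically invariant sequence.
-/

open MeasureTheory Filter Set
open scoped ENNReal

/-- A partial isomorphism of a standard Borel space `X`: a Borel bijection between
two Borel subsets `dom` and `ran` of `X`, with Borel inverse. -/
structure PartialIso (X : Type*) [MeasurableSpace X] where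
  dom : Set X
  ran : Set X
  toFun : X → X
  invFun : X → X
  measurableSet_dom : MeasurableSet dom
  measurableSet_ran : MeasurableSet ran
  measurable_toFun : Measurable toFun
  measurable_invFun : Measurable invFun
  mapsTo : Set.MapsTo toFun dom ran
  mapsTo_inv : Set.MapsTo invFun ran dom
  left_inv : ∀ x ∈ dom, invFun (toFun x) = x
  right_inv : ∀ y ∈ ran, toFun (invFun y) = y

namespace PartialIso

variable {X : Type*} [MeasurableSpace X]

/-- The identity as a partial isomorphism. -/
def refl (X : Type*) [MeasurableSpace X] : PartialIso X :=
  ⟨Set.univ, Set.univ, id, id, MeasurableSet.univ, MeasurableSet.univ,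
   measurable_id, measurable_id, Set.mapsTo_univ _ _, Set.mapsTo_univ _ _,
   fun _ _ => rfl, fun _ _ => rfl⟩

/-- The inverse of a partial isomorphism. -/
def symm (f : PartialIso X) : PartialIso X :=
  ⟨f.ran, f.dom, f.invFun, f.toFun, f.measurableSet_ran, f.measurableSet_dom,
   f.measurable_invFun, f.measurable_toFun, f.mapsTo_inv, f.mapsTo,
   f.right_inv, f.left_inv⟩

/-- Composition (first `f`, then `g`) of partial isomorphisms, on its natural domain. -/
def trans (f g : PartialIso X) : PartialIso X where
  dom := f.dom ∩ f.toFun ⁻¹' g.dom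
  ran := g.ran ∩ g.invFun ⁻¹' f.ran
  toFun := g.toFun ∘ f.toFun
  invFun := f.invFun ∘ g.invFun
  measurableSet_dom := f.measurableSet_dom.inter (f.measurable_toFun g.measurableSet_dom)
  measurableSet_ran := g.measurableSet_ran.inter (g.measurable_invFun f.measurableSet_ran)
  measurable_toFun := g.measurable_toFun.comp f.measurable_toFun
  measurable_invFun := f.measurable_invFun.comp g.measurable_invFun
  mapsTo := by
    rintro x ⟨hx1, hx2⟩
    refine ⟨g.mapsTo hx2, ?_⟩
    show g.invFun (g.toFun (f.toFun x)) ∈ f.ran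
    rw [g.left_inv _ hx2]
    exact f.mapsTo hx1
  mapsTo_inv := by
    rintro y ⟨hy1, hy2⟩
    refine ⟨f.mapsTo_inv hy2, ?_⟩
    show f.toFun (f.invFun (g.invFun y)) ∈ g.dom
    rw [f.right_inv _ hy2]
    exact g.mapsTo_inv hy1
  left_inv := by
    rintro x ⟨hx1, hx2⟩
    show f.invFun (g.invFun (g.toFun (f.toFun x))) = x
    rw [g.left_inv _ hx2, f.left_inv _ hx1]
  right_inv := by
    rintro y ⟨hy1, hy2⟩
    show g.toFun (f.toFun (f.invFun (g.invFun y))) = y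
    rw [f.right_inv _ hy2, g.right_inv _ hy1]

/-- A partial isomorphism is nonsingular for `μ` (is a partial isomorphism of `(X, μ)`)
if it maps null sets inside its domain exactly to null sets. -/
def Nonsingular (μ : Measure X) (f : PartialIso X) : Prop :=
  ∀ A ⊆ f.dom, MeasurableSet A → (μ A = 0 ↔ μ (f.toFun '' A) = 0)

/-- The graph of the partial isomorphism `f` is contained in the relation `R`. -/
def IsInnerOf (f : PartialIso X) (R : Set (X × X)) : Prop :=
  ∀ x ∈ f.dom, (x, f.toFun x) ∈ R

end PartialIso

variable {X : Type*} [MeasurableSpace X]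

/-- `IsWord Φ m k` : `m` is a `Φ`-word of length `k`, i.e. a composition of `k` elements
of `Φ` and their inverses (on its natural domain). -/
def IsWord (Φ : Set (PartialIso X)) (m : PartialIso X) (k : ℕ) : Prop :=
  ∃ l : List (PartialIso X), l.length = k ∧
    (∀ φ ∈ l, φ ∈ Φ ∨ ∃ ψ ∈ Φ, φ = ψ.symm) ∧
    m = l.foldl PartialIso.trans (PartialIso.refl X)

/-- `wordDistLE Φ μ A B r` : the essential distance `d_Φ(A, B)` is at most `r`, i.e. the
set of points of `A` sent into `B` by some `Φ`-word of length at most `r` has positive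
measure. -/
def wordDistLE (Φ : Set (PartialIso X)) (μ : Measure X) (A B : Set X) (r : ℕ) : Prop :=
  0 < μ {x ∈ A | ∃ m k, IsWord Φ m k ∧ k ≤ r ∧ x ∈ m.dom ∧ m.toFun x ∈ B}

/-- The metric-measure space `(X, d_Φ, μ)` is concentrated. -/
def Concentrated (Φ : Set (PartialIso X)) (μ : Measure X) : Prop :=
  ∀ δ : ℝ≥0∞, 0 < δ → ∃ r : ℕ, ∀ A B : Set X, MeasurableSet A → MeasurableSet B →
    δ ≤ μ A → δ ≤ μ B → wordDistLE Φ μ A B r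

/-- The metric `d_Φ` is ergodic relative to `μ` : any two sets of positive measure are at
finite essential distance. -/
def MetricErgodic (Φ : Set (PartialIso X)) (μ : Measure X) : Prop :=
  ∀ A B : Set X, MeasurableSet A → MeasurableSet B → 0 < μ A → 0 < μ B →
    ∃ r : ℕ, wordDistLE Φ μ A B r

/-- A sequence of Borel sets is asymptotically invariant for the family `Φ`. -/
def AsympInvariant (Φ : Set (PartialIso X)) (μ : Measure X) (A : ℕ → Set X) : Prop :=
  ∀ m k, IsWord Φ m k →
    Tendsto (fun n => μ (m.toFun '' (A n ∩ m.dom) \ A n)) atTop (nhds 0)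

/-- A sequence of Borel sets is nontrivial: measures uniformly bounded away from `0` and `1`. -/
def NontrivialSeq (μ : Measure X) (A : ℕ → Set X) : Prop :=
  ∃ δ : ℝ≥0∞, 0 < δ ∧ ∀ n, δ ≤ μ (A n) ∧ μ (A n) ≤ 1 - δ

/-- A countable Borel equivalence relation on `X`. -/
def IsCountableBorelER (R : Set (X × X)) : Prop :=
  MeasurableSet R ∧ Equivalence (fun x y => (x, y) ∈ R) ∧ ∀ x, {y | (x, y) ∈ R}.Countable

/-- `μ` is quasi-invariant for `R` : partial isomorphisms of `R` map null sets to null sets. -/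
def QuasiInvariant (μ : Measure X) (R : Set (X × X)) : Prop :=
  ∀ f : PartialIso X, f.IsInnerOf R → ∀ N ⊆ f.dom, MeasurableSet N → μ N = 0 →
    μ (f.toFun '' N) = 0

/-- `μ` is invariant for `R` : partial isomorphisms of `R` preserve the measure. -/
def InvariantMeasure (μ : Measure X) (R : Set (X × X)) : Prop :=
  ∀ f : PartialIso X, f.IsInnerOf R → ∀ A ⊆ f.dom, MeasurableSet A →
    μ (f.toFun '' A) = μ A

/-- `R` is ergodic for `μ` : every Borel saturated set is null or conull. -/
def ErgodicRel (μ : Measure X) (R : Set (X × X)) : Prop :=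
  ∀ A : Set X, MeasurableSet A → (∀ x ∈ A, ∀ y, (x, y) ∈ R → y ∈ A) →
    μ A = 0 ∨ μ Aᶜ = 0

/-- `Φ` is a graphing of `R` : a family of partial isomorphisms of `R` whose words connect
almost every pair of equivalent points. -/
def IsGraphing (Φ : Set (PartialIso X)) (μ : Measure X) (R : Set (X × X)) : Prop :=
  (∀ φ ∈ Φ, φ.IsInnerOf R) ∧
  ∀ᵐ x ∂μ, ∀ y, (x, y) ∈ R → ∃ m k, IsWord Φ m k ∧ x ∈ m.dom ∧ m.toFun x = y

/-- A sequence of Borel sets is asymptotically invariant for the relation `R`. -/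
def AsympInvariantRel (μ : Measure X) (R : Set (X × X)) (A : ℕ → Set X) : Prop :=
  ∀ f : PartialIso X, f.IsInnerOf R →
    Tendsto (fun n => μ (f.toFun '' (A n ∩ f.dom) \ A n)) atTop (nhds 0)

/-- `R` is strongly ergodic : every asymptotically invariant sequence is trivial. -/
def StronglyErgodic (μ : Measure X) (R : Set (X × X)) : Prop :=
  ¬ ∃ A : ℕ → Set X, (∀ n, MeasurableSet (A n)) ∧ AsympInvariantRel μ R A ∧
    NontrivialSeq μ A

/-- The boundary `∂_Φ A` of a set `A` with respect to the family `Φ`. -/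
def bdry (Φ : Set (PartialIso X)) (A : Set X) : Set X :=
  (⋃ φ ∈ Φ, φ.toFun '' (A ∩ φ.dom) ∪ φ.invFun '' (A ∩ φ.ran)) \ A

/-- A vanishing Følner sequence for the family `Φ`. -/
def VanishingFolner (Φ : Set (PartialIso X)) (μ : Measure X) (A : ℕ → Set X) : Prop :=
  (∀ n, MeasurableSet (A n)) ∧ (∀ n, 0 < μ (A n)) ∧
  Tendsto (fun n => μ (A n)) atTop (nhds 0) ∧
  Tendsto (fun n => μ (bdry Φ (A n)) / μ (A n)) atTop (nhds 0)

/-- The equivalence relation generated by the family `Φ` : `(x, y) ∈ RGen Φ` iff `y = m x`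
for some `Φ`-word `m`. -/
def RGen (Φ : Set (PartialIso X)) : Set (X × X) :=
  {p | ∃ m k, IsWord Φ m k ∧ p.1 ∈ m.dom ∧ m.toFun p.1 = p.2}

namespace PartialIso

theorem ext {f g : PartialIso X} (h_dom : f.dom = g.dom) (h_ran : f.ran = g.ran)
    (h_toFun : f.toFun = g.toFun) (h_invFun : f.invFun = g.invFun) : f = g := by
  cases f; cases g
  cases h_dom; cases h_ran; cases h_toFun; cases h_invFun
  rfl

theorem refl_trans (f : PartialIso X) : (refl X).trans f = f := by
  apply PartialIso.ext <;> simp [trans, refl]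

theorem trans_refl (f : PartialIso X) : f.trans (refl X) = f := by
  apply PartialIso.ext <;> simp [trans, refl]

theorem trans_assoc (f g h : PartialIso X) : (f.trans g).trans h = f.trans (g.trans h) := by
  apply PartialIso.ext <;>
    simp [trans, Set.preimage_comp, Set.preimage_inter, Set.inter_assoc, Function.comp_assoc]

theorem symm_trans (f g : PartialIso X) : (f.trans g).symm = g.symm.trans f.symm := rfl

end PartialIso

def wordOf (l : List (PartialIso X)) : PartialIso X :=
  l.foldl PartialIso.trans (PartialIso.refl X)

theorem foldl_trans_eq_trans_wordOf (l : List (PartialIso X)) (e : PartialIso X) :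
    l.foldl PartialIso.trans e = e.trans (wordOf l) := by
  induction l generalizing e with
  | nil => exact (PartialIso.trans_refl e).symm
  | cons a t ih =>
    rw [List.foldl_cons, ih,
      show wordOf (a :: t) = t.foldl PartialIso.trans ((PartialIso.refl X).trans a) from rfl,
      ih, PartialIso.refl_trans, PartialIso.trans_assoc]

theorem wordOf_append (l₁ l₂ : List (PartialIso X)) :
    wordOf (l₁ ++ l₂) = (wordOf l₁).trans (wordOf l₂) := by
  rw [wordOf, List.foldl_append, foldl_trans_eq_trans_wordOf]
  rfl

theorem wordOf_singleton (a : PartialIso X) : wordOf [a] = a :=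
  PartialIso.refl_trans a

theorem wordOf_reverse_map_symm (l : List (PartialIso X)) :
    wordOf (l.reverse.map PartialIso.symm) = (wordOf l).symm := by
  induction l with
  | nil => rfl
  | cons a t ih =>
    rw [List.reverse_cons, List.map_append, wordOf_append, ih, List.map_singleton,
      wordOf_singleton, ← List.singleton_append, wordOf_append, wordOf_singleton,
      PartialIso.symm_trans]

section Words

variable {Φ : Set (PartialIso X)}

theorem IsWord.refl : IsWord Φ (PartialIso.refl X) 0 :=
  ⟨[], rfl, by simp, rfl⟩

theorem IsWord.symm {m : PartialIso X} {k : ℕ} (hm : IsWord Φ m k) : IsWord Φ m.symm k := by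
  obtain ⟨l, rfl, hl, rfl⟩ := hm
  refine ⟨l.reverse.map PartialIso.symm, by simp, ?_, (wordOf_reverse_map_symm l).symm⟩
  simp only [List.mem_map, List.mem_reverse]
  rintro _ ⟨φ, hφ, rfl⟩
  rcases hl φ hφ with hφΦ | ⟨ψ, hψ, rfl⟩
  · exact Or.inr ⟨φ, hφΦ, rfl⟩
  · exact Or.inl hψ

theorem IsWord.trans {m m' : PartialIso X} {k k' : ℕ} (hm : IsWord Φ m k)
    (hm' : IsWord Φ m' k') : IsWord Φ (m.trans m') (k + k') := by
  obtain ⟨l, rfl, hl, rfl⟩ := hm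
  obtain ⟨l', rfl, hl', rfl⟩ := hm'
  refine ⟨l ++ l', List.length_append, ?_, (wordOf_append l l').symm⟩
  intro φ hφ
  exact (List.mem_append.1 hφ).elim (hl φ) (hl' φ)

theorem finite_setOf_isWord_le (hfin : Φ.Finite) (r : ℕ) :
    {m | ∃ k, IsWord Φ m k ∧ k ≤ r}.Finite := by
  set S := Φ ∪ PartialIso.symm '' Φ
  have : Finite S := (hfin.union (hfin.image _)).to_subtype
  refine ((List.finite_length_le S r).image fun l => wordOf (l.map Subtype.val)).subset ?_
  rintro _ ⟨_, ⟨l, rfl, hl, rfl⟩, hr⟩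
  have hlS : ∀ φ ∈ l, φ ∈ S := fun φ hφ =>
    (hl φ hφ).imp id fun ⟨ψ, hψ, hφψ⟩ => ⟨ψ, hψ, hφψ.symm⟩
  lift l to List S using hlS
  exact ⟨l, by simpa using hr, rfl⟩

end Words

section Thickening

variable {Φ : Set (PartialIso X)}

/-- The closed `r`-thickening `{x | d_Φ(x, T) ≤ r}` of `T` for the word metric. -/
def wordThickening (Φ : Set (PartialIso X)) (r : ℕ) (T : Set X) : Set X :=
  {x | ∃ m k, IsWord Φ m k ∧ k ≤ r ∧ x ∈ m.dom ∧ m.toFun x ∈ T}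

theorem wordDistLE_iff {μ : Measure X} {A B : Set X} {r : ℕ} :
    wordDistLE Φ μ A B r ↔ 0 < μ (A ∩ wordThickening Φ r B) :=
  Iff.rfl

theorem subset_wordThickening (r : ℕ) (T : Set X) : T ⊆ wordThickening Φ r T :=
  fun x hx => ⟨PartialIso.refl X, 0, IsWord.refl, r.zero_le, Set.mem_univ x, hx⟩

theorem wordThickening_mono {r r' : ℕ} (h : r ≤ r') (T : Set X) :
    wordThickening Φ r T ⊆ wordThickening Φ r' T := by
  rintro x ⟨m, k, hm, hk, hx, hmx⟩
  exact ⟨m, k, hm, hk.trans h, hx, hmx⟩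

theorem measurableSet_wordThickening (hfin : Φ.Finite) (r : ℕ) {T : Set X}
    (hT : MeasurableSet T) : MeasurableSet (wordThickening Φ r T) := by
  have : wordThickening Φ r T =
      ⋃ m ∈ {m | ∃ k, IsWord Φ m k ∧ k ≤ r}, m.dom ∩ m.toFun ⁻¹' T := by
    ext x
    simp only [wordThickening, Set.mem_ofPred_eq, Set.mem_iUnion, Set.mem_inter_iff,
      Set.mem_preimage, exists_prop]
    exact ⟨fun ⟨m, k, hm, hk, hx, hmx⟩ => ⟨m, ⟨k, hm, hk⟩, hx, hmx⟩,
      fun ⟨m, ⟨k, hm, hk⟩, hx, hmx⟩ => ⟨m, k, hm, hk, hx, hmx⟩⟩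
  rw [this]
  exact (finite_setOf_isWord_le hfin r).measurableSet_biUnion fun m _ =>
    m.measurableSet_dom.inter (m.measurable_toFun hT)

theorem mapsTo_wordThickening {m : PartialIso X} {k : ℕ} (hm : IsWord Φ m k) (j : ℕ)
    (T : Set X) :
    Set.MapsTo m.toFun (wordThickening Φ j T ∩ m.dom) (wordThickening Φ (j + k) T) := by
  rintro x ⟨⟨w, kw, hw, hkw, hxw, hwx⟩, hx⟩
  have hback : m.invFun (m.toFun x) = x := m.left_inv x hx
  refine ⟨m.symm.trans w, k + kw, hm.symm.trans hw, by omega, ⟨m.mapsTo hx, ?_⟩, ?_⟩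
  · show m.invFun (m.toFun x) ∈ w.dom
    rwa [hback]
  · show w.toFun (m.invFun (m.toFun x)) ∈ T
    rwa [hback]

theorem image_wordThickening_sdiff_subset {m : PartialIso X} {k s : ℕ} (hm : IsWord Φ m k)
    (hks : k ≤ s) (j : ℕ) (T : Set X) :
    m.toFun '' (wordThickening Φ j T ∩ m.dom) \ wordThickening Φ j T ⊆
      wordThickening Φ (j + s) T \ wordThickening Φ j T :=
  Set.sdiff_subset_sdiff_left <| (mapsTo_wordThickening hm j T).image_subset.trans <|
    wordThickening_mono (by omega) T

theorem disjoint_wordThickening_comm {r : ℕ} {S T : Set X} :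
    Disjoint (wordThickening Φ r T) S ↔ Disjoint T (wordThickening Φ r S) := by
  have key : ∀ {S T : Set X}, Disjoint T (wordThickening Φ r S) →
      Disjoint (wordThickening Φ r T) S := by
    intro S T h
    refine Set.disjoint_left.2 fun x ⟨m, k, hm, hk, hx, hmx⟩ hxS => Set.disjoint_left.1 h hmx ?_
    refine ⟨m.symm, k, hm.symm, hk, m.mapsTo hx, ?_⟩
    show m.invFun (m.toFun x) ∈ S
    rwa [m.left_inv x hx]
  exact ⟨fun h => (key h.symm).symm, key⟩

end Thickening

theorem exists_measure_sdiff_succ_le {α : Type*} [MeasurableSpace α] (μ : Measure α)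
    [IsProbabilityMeasure μ] {N : ℕ → Set α} (hN : Monotone N)
    (hmeas : ∀ i, MeasurableSet (N i)) (n : ℕ) :
    ∃ i < n + 1, μ (N (i + 1) \ N i) ≤ ((n : ℝ≥0∞) + 1)⁻¹ := by
  have hsum : ∑ i ∈ Finset.range (n + 1), μ (N (i + 1) \ N i) ≤
      ∑ _i ∈ Finset.range (n + 1), ((n : ℝ≥0∞) + 1)⁻¹ := by
    rw [Finset.sum_const, Finset.card_range, nsmul_eq_mul, Nat.cast_add_one,
      ENNReal.mul_inv_cancel (by positivity) (by simp), ← measure_univ (μ := μ)]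
    simp_rw [← hN.disjointed_add_one]
    exact sum_measure_le_measure_univ
      (fun i _ => (MeasurableSet.disjointed hmeas _).nullMeasurableSet)
      fun i _ j _ hij => (disjoint_disjointed N (by omega : i + 1 ≠ j + 1)).aedisjoint
  obtain ⟨i, hi, hle⟩ := ENNReal.exists_le_of_sum_le Finset.nonempty_range_add_one hsum
  exact ⟨i, Finset.mem_range.1 hi, hle⟩

section Measure

variable {Φ : Set (PartialIso X)} {μ : Measure X}

theorem AsympInvariant.tendsto_measure_wordThickening_sdiff (hfin : Φ.Finite)
    {A : ℕ → Set X} (hA : AsympInvariant Φ μ A) (r : ℕ) :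
    Tendsto (fun n => μ (wordThickening Φ r (A n) \ A n)) atTop (nhds 0) := by
  set W := (finite_setOf_isWord_le hfin r).toFinset
  have hsub : ∀ n, wordThickening Φ r (A n) \ A n ⊆
      ⋃ m ∈ W, m.symm.toFun '' (A n ∩ m.symm.dom) \ A n := by
    rintro n x ⟨⟨m, k, hm, hk, hx, hmx⟩, hxA⟩
    refine Set.mem_biUnion ((Set.Finite.mem_toFinset _).2 ⟨k, hm, hk⟩) ⟨?_, hxA⟩
    exact ⟨m.toFun x, ⟨hmx, m.mapsTo hx⟩, m.left_inv x hx⟩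
  have hsum : Tendsto (fun n => ∑ m ∈ W, μ (m.symm.toFun '' (A n ∩ m.symm.dom) \ A n))
      atTop (nhds 0) := by
    rw [← Finset.sum_const_zero (s := W)]
    refine tendsto_finsetSum W fun m hm => ?_
    obtain ⟨k, hmk, -⟩ := (Set.Finite.mem_toFinset _).1 hm
    exact hA m.symm k hmk.symm
  exact tendsto_of_tendsto_of_tendsto_of_le_of_le tendsto_const_nhds hsum (fun _ => zero_le)
    fun n => (measure_mono (hsub n)).trans (measure_biUnion_finset_le _ _)

/-- Removing from `A` the null set of points `r`-close to `B` makes the pair exactly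
`r`-apart. -/
theorem exists_disjoint_wordThickening_of_not_concentrated (hfin : Φ.Finite)
    (h : ¬ Concentrated Φ μ) :
    ∃ δ > 0, ∀ r, ∃ A B : Set X, MeasurableSet A ∧ MeasurableSet B ∧ δ ≤ μ A ∧ δ ≤ μ B ∧
      Disjoint (wordThickening Φ r A) B := by
  simp only [Concentrated, wordDistLE_iff] at h
  push Not at h
  obtain ⟨δ, hδ, hfar⟩ := h
  refine ⟨δ, hδ, fun r => ?_⟩
  obtain ⟨A, B, hA, hB, hAδ, hBδ, hAB⟩ := hfar r
  refine ⟨A \ wordThickening Φ r B, B, hA.diff (measurableSet_wordThickening hfin r hB), hB,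
    ?_, hBδ, disjoint_wordThickening_comm.2 Set.disjoint_sdiff_left⟩
  rwa [← Set.sdiff_self_inter, measure_sdiff_null (nonpos_iff_eq_zero.1 hAB)]

variable [IsProbabilityMeasure μ]

theorem Concentrated.not_nontrivialSeq (hc : Concentrated Φ μ) (hfin : Φ.Finite)
    {A : ℕ → Set X} (hA : ∀ n, MeasurableSet (A n)) (hAI : AsympInvariant Φ μ A) :
    ¬ NontrivialSeq μ A := by
  rintro ⟨δ, hδ, hAδ⟩
  have hδ1 : δ ≤ 1 := (hAδ 0).1.trans prob_le_one
  have hδ2 : 0 < δ / 2 := ENNReal.half_pos hδ.ne'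
  obtain ⟨r, hr⟩ := hc (δ / 2) hδ2
  have hcompl : ∀ n, μ (wordThickening Φ r (A n))ᶜ < δ / 2 := by
    intro n
    by_contra! h
    have := hr _ _ (measurableSet_wordThickening hfin r (hA n)).compl (hA n) h
      (ENNReal.half_le_self.trans (hAδ n).1)
    rw [wordDistLE_iff, Set.compl_inter_self, measure_empty] at this
    exact lt_irrefl 0 this
  obtain ⟨n, hn⟩ :=
    ((hAI.tendsto_measure_wordThickening_sdiff hfin r).eventually_lt_const hδ2).exists
  set N := wordThickening Φ r (A n)
  have hsplit : μ (A n) + (μ (N \ A n) + μ Nᶜ) = 1 := by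
    rw [← add_assoc, measure_add_sdiff (hA n).nullMeasurableSet,
      Set.union_eq_self_of_subset_left (subset_wordThickening r (A n)),
      prob_add_prob_compl (measurableSet_wordThickening hfin r (hA n))]
  have hlt : μ (A n) + (μ (N \ A n) + μ Nᶜ) < (1 - δ) + (δ / 2 + δ / 2) :=
    ENNReal.add_lt_add_of_le_of_lt (measure_ne_top μ _) (hAδ n).2
      (ENNReal.add_lt_add hn (hcompl n))
  rw [hsplit, ENNReal.add_halves, tsub_add_cancel_of_le hδ1] at hlt
  exact lt_irrefl 1 hlt

theorem exists_asympInvariant_nontrivialSeq_of_disjoint (hfin : Φ.Finite) {δ : ℝ≥0∞}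
    (hδ : 0 < δ) (hfar : ∀ r, ∃ A B : Set X, MeasurableSet A ∧ MeasurableSet B ∧ δ ≤ μ A ∧
      δ ≤ μ B ∧ Disjoint (wordThickening Φ r A) B) :
    ∃ C : ℕ → Set X, (∀ n, MeasurableSet (C n)) ∧ AsympInvariant Φ μ C ∧ NontrivialSeq μ C := by
  choose A B hA hB hAδ hBδ hAB using hfar
  have hshell : ∀ n, ∃ i < n + 1,
      μ (wordThickening Φ ((i + 1) * (n + 1)) (A ((n + 1) * (n + 1))) \
        wordThickening Φ (i * (n + 1)) (A ((n + 1) * (n + 1)))) ≤ ((n : ℝ≥0∞) + 1)⁻¹ :=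
    fun n => exists_measure_sdiff_succ_le μ
      (fun _ _ hij => wordThickening_mono (Nat.mul_le_mul_right _ hij) _)
      (fun _ => measurableSet_wordThickening hfin _ (hA _)) n
  choose i hi hile using hshell
  refine ⟨fun n => wordThickening Φ (i n * (n + 1)) (A ((n + 1) * (n + 1))),
    fun n => measurableSet_wordThickening hfin _ (hA _), ?_, δ, hδ, fun n => ⟨?_, ?_⟩⟩
  · intro m k hm
    have hlim : Tendsto (fun n : ℕ => ((n : ℝ≥0∞) + 1)⁻¹) atTop (nhds 0) := by
      simpa [Function.comp_def] using
        ENNReal.tendsto_inv_nat_nhds_zero.comp (tendsto_add_atTop_nat 1)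
    refine tendsto_of_tendsto_of_tendsto_of_le_of_le' tendsto_const_nhds hlim
      (Eventually.of_forall fun _ => zero_le) ?_
    filter_upwards [eventually_ge_atTop k] with n hkn
    refine (measure_mono ?_).trans (hile n)
    rw [add_one_mul (i n)]
    exact image_wordThickening_sdiff_subset hm (by omega) _ _
  · exact (hAδ _).trans (measure_mono (subset_wordThickening _ _))
  · calc μ (wordThickening Φ (i n * (n + 1)) (A ((n + 1) * (n + 1))))
        ≤ μ (B ((n + 1) * (n + 1)))ᶜ := measure_mono <|
          (wordThickening_mono (Nat.mul_le_mul_right _ (hi n).le) _).trans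
            (hAB _).subset_compl_right
      _ ≤ 1 - δ := by
        rw [prob_compl_eq_one_sub (hB _)]
        exact tsub_le_tsub_left (hBδ _) 1

end Measure

theorem stmt0_general {X : Type*} [MeasurableSpace X]
    (μ : Measure X) [IsProbabilityMeasure μ]
    (Φ : Set (PartialIso X)) (hfin : Φ.Finite) :
    Concentrated Φ μ ↔
      ¬ ∃ A : ℕ → Set X, (∀ n, MeasurableSet (A n)) ∧
          AsympInvariant Φ μ A ∧ NontrivialSeq μ A := by
  refine ⟨fun hc ⟨A, hA, hAI, hA_nt⟩ => hc.not_nontrivialSeq hfin hA hAI hA_nt, fun h => ?_⟩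
  by_contra hnc
  obtain ⟨δ, hδ, hfar⟩ := exists_disjoint_wordThickening_of_not_concentrated hfin hnc
  exact h (exists_asympInvariant_nontrivialSeq_of_disjoint hfin hδ hfar)

/-- For a finite family `Φ` of partial isomorphisms of `(X, μ)` whose induced
metric is ergodic, the metric-measure space `(X, d_Φ, μ)` is concentrated iff there is no
nontrivial asymptotically invariant sequence of Borel sets for `Φ`. -/
theorem stmt0 {X : Type*} [MeasurableSpace X] [StandardBorelSpace X]
    (μ : Measure X) [IsProbabilityMeasure μ] [NullSingletonClass μ]
    (Φ : Set (PartialIso X)) (hfin : Φ.Finite)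
    (hns : ∀ φ ∈ Φ, φ.Nonsingular μ)
    (herg : MetricErgodic Φ μ) :
    Concentrated Φ μ ↔
      ¬ ∃ A : ℕ → Set X, (∀ n, MeasurableSet (A n)) ∧
          AsympInvariant Φ μ A ∧ NontrivialSeq μ A :=
  stmt0_general μ Φ hfin
end

section
/- Let R be a countable Borel equivalence relation on a standard Borel space X with an atomless quasi-invariant Borel probability measure μ, and let Φ be a finite family of partial isomorphisms of R. Suppose that for every δ ∈ (0,1) there exists an asymptotically invariant sequence (A_k) for R with μ(A_k) = δ for all k. Then Φ admits a vanishing Følner sequence. -/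
open MeasureTheory Filter Set
open scoped ENNReal

variable {X : Type*} [MeasurableSpace X]

/-!
The boundary `∂_Φ A` is covered by the finitely many sets `φ(A) \ A` and `φ⁻¹(A) \ A`,
`φ ∈ Φ`; since `R` is symmetric, each `φ⁻¹` is again a partial isomorphism of `R`, so along an
asymptotically invariant sequence the measure of the boundary tends to `0`. Taking such
sequences of sets of measure `δₙ → 0` and, for each `n`, a set whose boundary is small
compared with `δₙ` gives a vanishing Følner sequence.
-/

namespace PartialIso

theorem IsInnerOf.symm {R : Set (X × X)} (hR : ∀ x y, (x, y) ∈ R → (y, x) ∈ R)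
    {f : PartialIso X} (hf : f.IsInnerOf R) : f.symm.IsInnerOf R := by
  intro y hy
  have h := hf _ (f.mapsTo_inv hy)
  rw [f.right_inv y hy] at h
  exact hR _ _ h

def escape (f : PartialIso X) (A : Set X) : Set X :=
  f.toFun '' (A ∩ f.dom) \ A

end PartialIso

theorem AsympInvariantRel.tendsto_measure_escape {μ : Measure X} {R : Set (X × X)}
    {A : ℕ → Set X} (hA : AsympInvariantRel μ R A) {f : PartialIso X} (hf : f.IsInnerOf R) :
    Tendsto (fun k => μ (f.escape (A k))) atTop (nhds 0) :=
  hA f hf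

theorem bdry_eq_biUnion_escape (Φ : Set (PartialIso X)) (A : Set X) :
    bdry Φ A = ⋃ φ ∈ Φ, φ.escape A ∪ φ.symm.escape A := by
  simp only [bdry, PartialIso.escape, PartialIso.symm, iUnion_sdiff, union_sdiff_distrib]

theorem measure_bdry_le_sum_escape (μ : Measure X) {Φ : Set (PartialIso X)} (hΦ : Φ.Finite)
    (A : Set X) :
    μ (bdry Φ A) ≤ ∑ φ ∈ hΦ.toFinset, (μ (φ.escape A) + μ (φ.symm.escape A)) := by
  calc μ (bdry Φ A) = μ (⋃ φ ∈ hΦ.toFinset, φ.escape A ∪ φ.symm.escape A) := by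
        simp only [bdry_eq_biUnion_escape, Finite.mem_toFinset]
    _ ≤ ∑ φ ∈ hΦ.toFinset, μ (φ.escape A ∪ φ.symm.escape A) := measure_biUnion_finset_le _ _
    _ ≤ _ := Finset.sum_le_sum fun φ _ => measure_union_le _ _

theorem tendsto_measure_bdry_of_asympInvariantRel {μ : Measure X} {R : Set (X × X)}
    (hR : ∀ x y, (x, y) ∈ R → (y, x) ∈ R) {Φ : Set (PartialIso X)} (hΦ : Φ.Finite)
    (hΦR : ∀ φ ∈ Φ, φ.IsInnerOf R) {A : ℕ → Set X} (hA : AsympInvariantRel μ R A) :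
    Tendsto (fun k => μ (bdry Φ (A k))) atTop (nhds 0) := by
  have hsum : Tendsto
      (fun k => ∑ φ ∈ hΦ.toFinset, (μ (φ.escape (A k)) + μ (φ.symm.escape (A k))))
      atTop (nhds 0) := by
    simpa only [add_zero, Finset.sum_const_zero] using tendsto_finsetSum hΦ.toFinset fun φ hφ =>
      have hφR := hΦR φ (hΦ.mem_toFinset.1 hφ)
      (hA.tendsto_measure_escape hφR).add (hA.tendsto_measure_escape (hφR.symm hR))
  exact tendsto_of_tendsto_of_tendsto_of_le_of_le tendsto_const_nhds hsum (fun _ => zero_le)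
    fun k => measure_bdry_le_sum_escape μ hΦ (A k)

theorem ENNReal.exists_tendsto_comp_zero_of_forall_tendsto_zero {f : ℕ → ℕ → ℝ≥0∞}
    (hf : ∀ n, Tendsto (f n) atTop (nhds 0)) :
    ∃ k : ℕ → ℕ, Tendsto (fun n => f n (k n)) atTop (nhds 0) := by
  have hpos : ∀ n : ℕ, (0 : ℝ≥0∞) < ((n : ℝ≥0∞) + 1)⁻¹ := fun n => ENNReal.inv_pos.2 (by simp)
  choose k hk using fun n => ((hf n).eventually_lt_const (hpos n)).exists
  refine ⟨k, tendsto_of_tendsto_of_tendsto_of_le_of_le tendsto_const_nhds ?_ (fun _ => zero_le)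
    fun n => (hk n).le⟩
  simpa [Function.comp_def] using ENNReal.tendsto_inv_nat_nhds_zero.comp (tendsto_add_atTop_nat 1)

theorem exists_vanishingFolner_of_tendsto_bdry {μ : Measure X} {Φ : Set (PartialIso X)}
    {δ : ℕ → ℝ≥0∞} (hδ0 : ∀ n, δ n ≠ 0) (hδ : Tendsto δ atTop (nhds 0)) {B : ℕ → ℕ → Set X}
    (hBmeas : ∀ n k, MeasurableSet (B n k)) (hμB : ∀ n k, μ (B n k) = δ n)
    (hbdry : ∀ n, Tendsto (fun k => μ (bdry Φ (B n k))) atTop (nhds 0)) :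
    ∃ A : ℕ → Set X, VanishingFolner Φ μ A := by
  have hratio : ∀ n, Tendsto (fun k => μ (bdry Φ (B n k)) / μ (B n k)) atTop (nhds 0) := by
    intro n
    simpa [hμB] using ENNReal.Tendsto.div_const (hbdry n) (Or.inr (hδ0 n))
  obtain ⟨k, hk⟩ := ENNReal.exists_tendsto_comp_zero_of_forall_tendsto_zero hratio
  refine ⟨fun n => B n (k n), fun n => hBmeas n (k n), fun n => ?_, ?_, hk⟩
  · rw [hμB]
    exact pos_iff_ne_zero.2 (hδ0 n)
  · simpa [hμB] using hδ

theorem stmt8_general {X : Type*} [MeasurableSpace X]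
    (μ : Measure X)
    (R : Set (X × X)) (hR : IsCountableBorelER R)
    (Φ : Set (PartialIso X)) (hΦfin : Φ.Finite) (hΦR : ∀ φ ∈ Φ, φ.IsInnerOf R)
    (hAI : ∀ δ : ℝ≥0∞, 0 < δ → δ < 1 →
      ∃ A : ℕ → Set X, (∀ k, MeasurableSet (A k)) ∧
        AsympInvariantRel μ R A ∧ ∀ k, μ (A k) = δ) :
    ∃ A : ℕ → Set X, VanishingFolner Φ μ A := by
  set δ : ℕ → ℝ≥0∞ := fun n => ((n : ℝ≥0∞) + 2)⁻¹
  have hδpos : ∀ n, 0 < δ n := fun n => ENNReal.inv_pos.2 (by simp)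
  have hδlt : ∀ n, δ n < 1 := fun n =>
    ENNReal.inv_lt_one.2 (lt_of_lt_of_le (by norm_num) le_add_self)
  have hδ : Tendsto δ atTop (nhds 0) := by
    simpa [δ, Function.comp_def] using
      ENNReal.tendsto_inv_nat_nhds_zero.comp (tendsto_add_atTop_nat 2)
  choose B hBmeas hBAI hμB using fun n => hAI (δ n) (hδpos n) (hδlt n)
  exact exists_vanishingFolner_of_tendsto_bdry (fun n => (hδpos n).ne') hδ hBmeas hμB
    fun n => tendsto_measure_bdry_of_asympInvariantRel (fun _ _ h => hR.2.1.symm h) hΦfin hΦR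
      (hBAI n)

/-- If for every `δ ∈ (0,1)` the relation `R` admits an asymptotically
invariant sequence of sets of constant measure `δ`, then any finite family `Φ` of partial
isomorphisms of `R` admits a vanishing Følner sequence. -/
theorem stmt8 {X : Type*} [MeasurableSpace X] [StandardBorelSpace X]
    (μ : Measure X) [IsProbabilityMeasure μ] [NullSingletonClass μ]
    (R : Set (X × X)) (hR : IsCountableBorelER R)
    (hqi : QuasiInvariant μ R)
    (Φ : Set (PartialIso X)) (hΦfin : Φ.Finite) (hΦR : ∀ φ ∈ Φ, φ.IsInnerOf R)
    (hAI : ∀ δ : ℝ≥0∞, 0 < δ → δ < 1 →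
      ∃ A : ℕ → Set X, (∀ k, MeasurableSet (A k)) ∧
        AsympInvariantRel μ R A ∧ ∀ k, μ (A k) = δ) :
    ∃ A : ℕ → Set X, VanishingFolner Φ μ A :=
  stmt8_general μ R hR Φ hΦfin hΦR hAI
end
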